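/- Partial derivative formula for the NOMA objective: F is differentiable at every p ∈ D, and for every k ∈ {1, …, K}, ∂F/∂p_k(p) = Σ_{j=k}^{K−1} [g_j Q_j/(S_j(p) g_j + η) − g_{j+1} Q_{j+1}/(S_j(p) g_{j+1} + η)] + g_K Q_K/(S_K(p) g_K + η) − Z (the sum is empty when k = K). -/

import Mathlib

/-!
Where the denominators are positive, `log (1 + p_k g_k / (S_{k-1} g_k + η))` equals
`log (S_k g_k + η) - log (S_{k-1} g_k + η)`, so near a feasible point `F` is a combination of
logarithms of affine functions of the prefix sums. As `∂S_m/∂p_k = [k ≤ m]`, differentiating and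
collecting the two terms that involve each `S_j` gives the stated telescoped formula.
-/

open Finset

/-- Prefix sum `S_k(p) = p_1 + ⋯ + p_k` (0-based: sum of the first `k` coordinates). -/
noncomputable def Sfun (K : ℕ) (p : Fin K → ℝ) (k : ℕ) : ℝ :=
  ∑ j : Fin K, if (j : ℕ) < k then p j else 0

/-- The NOMA objective `F`. -/
noncomputable def Fobj (K : ℕ) (g Q : Fin K → ℝ) (η Z : ℝ) (p : Fin K → ℝ) : ℝ :=
  (∑ k : Fin K, Q k * Real.log (1 + p k * g k / (Sfun K p (k : ℕ) * g k + η)))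
    - Z * Sfun K p K

/-- The feasible set `D`. -/
def Dfeas (K : ℕ) (Pmax : ℝ) : Set (Fin K → ℝ) :=
  {p | (∀ k, 0 ≤ p k) ∧ Sfun K p K ≤ Pmax}

/-- Extension of a `Fin K`-indexed family to `ℕ` (0-based; junk value `0` out of range). -/
noncomputable def ext (K : ℕ) (v : Fin K → ℝ) (n : ℕ) : ℝ :=
  if h : n < K then v ⟨n, h⟩ else 0

open Filter Topology

section PrefixSum

variable {K : ℕ}

noncomputable def prefixSum (K m : ℕ) : (Fin K → ℝ) →L[ℝ] ℝ :=
  ∑ j ∈ univ.filter (fun j : Fin K => (j : ℕ) < m), ContinuousLinearMap.proj (R := ℝ) j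

lemma coe_prefixSum (m : ℕ) : ⇑(prefixSum K m) = fun q => Sfun K q m := by
  ext q
  simp only [prefixSum, FunLike.coe_sum, Finset.sum_apply, ContinuousLinearMap.proj_apply, Sfun,
    ← sum_filter]

lemma prefixSum_single (m : ℕ) (k : Fin K) :
    prefixSum K m (Pi.single k 1) = if (k : ℕ) < m then 1 else 0 := by
  simp only [coe_prefixSum, Sfun, ← sum_filter, sum_pi_single', mem_filter, mem_univ, true_and]

lemma hasFDerivAt_Sfun (m : ℕ) (p : Fin K → ℝ) :
    HasFDerivAt (fun q => Sfun K q m) (prefixSum K m) p :=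
  coe_prefixSum m ▸ (prefixSum K m).hasFDerivAt

lemma continuous_Sfun (m : ℕ) : Continuous fun q : Fin K → ℝ => Sfun K q m :=
  coe_prefixSum m ▸ (prefixSum K m).continuous

lemma Sfun_succ (q : Fin K → ℝ) (k : Fin K) : Sfun K q (k + 1) = Sfun K q k + q k := by
  have : univ.filter (fun j : Fin K => (j : ℕ) < k + 1)
      = insert k (univ.filter fun j : Fin K => (j : ℕ) < k) := by
    ext j; simp [Fin.ext_iff]; omega
  rw [Sfun, Sfun, ← sum_filter, ← sum_filter, this, sum_insert (by simp), add_comm]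

lemma Sfun_nonneg {q : Fin K → ℝ} (hq : ∀ j, 0 ≤ q j) (m : ℕ) : 0 ≤ Sfun K q m :=
  sum_nonneg fun j _ => by split_ifs; exacts [hq j, le_rfl]

end PrefixSum

lemma ext_val {K : ℕ} (v : Fin K → ℝ) (j : Fin K) : ext K v j = v j := by
  simp [_root_.ext]

lemma Real.log_one_add_div {a b : ℝ} (ha : a ≠ 0) (hab : a + b ≠ 0) :
    Real.log (1 + b / a) = Real.log (a + b) - Real.log a := by
  rw [← Real.log_div hab ha, add_div, div_self ha]

lemma Finset.sum_fin_ite_le_eq_sum_Ico {M : Type*} [AddCommMonoid M] (F : ℕ → M) (a K : ℕ) :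
    ∑ j : Fin K, (if a ≤ (j : ℕ) then F j else 0) = ∑ j ∈ Ico a K, F j := by
  rw [Fin.sum_univ_eq_sum_range (fun j => if a ≤ j then F j else 0), ← sum_filter]
  congr 1
  ext j
  simp only [mem_filter, mem_range, mem_Ico]
  omega

lemma Finset.sum_Ico_sub_sum_Ico_succ {G : Type*} [AddCommGroup G] (A B : ℕ → G) {k K : ℕ}
    (hk : k < K) :
    ∑ j ∈ Ico k K, A j - ∑ j ∈ Ico (k + 1) K, B j
      = ∑ j ∈ Ico k (K - 1), (A j - B (j + 1)) + A (K - 1) := by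
  obtain ⟨K, rfl⟩ : ∃ K', K = K' + 1 := ⟨K - 1, by omega⟩
  rw [sum_Ico_succ_top (by omega), ← sum_Ico_add', sum_sub_distrib, Nat.add_sub_cancel]
  abel

section Objective

variable {K : ℕ} {g Q : Fin K → ℝ} {η Z : ℝ} {p : Fin K → ℝ}

variable (K g Q η Z) in
noncomputable def FobjLogForm (q : Fin K → ℝ) : ℝ :=
  (∑ k : Fin K, Q k * (Real.log (Sfun K q (k + 1) * g k + η) - Real.log (Sfun K q k * g k + η)))
    - Z * Sfun K q K

variable (K g Q η Z) in
noncomputable def FobjDeriv (p : Fin K → ℝ) : (Fin K → ℝ) →L[ℝ] ℝ :=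
  (∑ k : Fin K, Q k • ((g k / (Sfun K p (k + 1) * g k + η)) • prefixSum K (k + 1)
      - (g k / (Sfun K p k * g k + η)) • prefixSum K k))
    - Z • prefixSum K K

lemma Fobj_eventuallyEq_logForm (hden : ∀ (m : ℕ) (k : Fin K), 0 < Sfun K p m * g k + η) :
    Fobj K g Q η Z =ᶠ[𝓝 p] FobjLogForm K g Q η Z := by
  have hnear : ∀ m (k : Fin K), ∀ᶠ q in 𝓝 p, 0 < Sfun K q m * g k + η := fun m k =>
    continuousAt_const.eventually_lt
      (((continuous_Sfun m).mul continuous_const).add continuous_const).continuousAt (hden m k)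
  filter_upwards [eventually_all.2 fun k : Fin K => (hnear k k).and (hnear (k + 1) k)] with q hq
  refine congrArg (· - _) (sum_congr rfl fun k _ => congrArg (Q k * ·) ?_)
  have hsucc : Sfun K q k * g k + η + q k * g k = Sfun K q (k + 1) * g k + η := by
    rw [Sfun_succ]; ring
  rw [Real.log_one_add_div (hq k).1.ne' (hsucc ▸ (hq k).2.ne'), hsucc]

lemma hasFDerivAt_log_Sfun_mul_add_const (m : ℕ) {c : ℝ} (hpos : 0 < Sfun K p m * c + η) :
    HasFDerivAt (fun q => Real.log (Sfun K q m * c + η))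
      ((c / (Sfun K p m * c + η)) • prefixSum K m) p := by
  rw [div_eq_inv_mul, ← smul_smul]
  exact (Real.hasDerivAt_log hpos.ne').comp_hasFDerivAt p
    (((hasFDerivAt_Sfun m p).mul_const c).add_const η)

lemma hasFDerivAt_FobjLogForm (hden : ∀ (m : ℕ) (k : Fin K), 0 < Sfun K p m * g k + η) :
    HasFDerivAt (FobjLogForm K g Q η Z) (FobjDeriv K g Q η Z p) p :=
  (HasFDerivAt.fun_sum fun k _ =>
      ((hasFDerivAt_log_Sfun_mul_add_const _ (hden _ k)).sub
        (hasFDerivAt_log_Sfun_mul_add_const _ (hden _ k))).const_mul (Q k)).sub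
    ((hasFDerivAt_Sfun K p).const_mul Z)

lemma hasFDerivAt_Fobj (hden : ∀ (m : ℕ) (k : Fin K), 0 < Sfun K p m * g k + η) :
    HasFDerivAt (Fobj K g Q η Z) (FobjDeriv K g Q η Z p) p :=
  (hasFDerivAt_FobjLogForm hden).congr_of_eventuallyEq (Fobj_eventuallyEq_logForm hden)

lemma FobjDeriv_single (k : Fin K) :
    FobjDeriv K g Q η Z p (Pi.single k 1)
      = ∑ j : Fin K, (if (k : ℕ) ≤ j then g j * Q j / (Sfun K p (j + 1) * g j + η) else 0)
        - ∑ j : Fin K, (if (k : ℕ) + 1 ≤ j then g j * Q j / (Sfun K p j * g j + η) else 0) - Z := by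
  simp only [FobjDeriv, sub_apply, FunLike.coe_sum, Finset.sum_apply,
    smul_apply, smul_eq_mul, prefixSum_single, if_pos k.isLt, mul_one,
    ← sum_sub_distrib]
  congr 2 with j
  split_ifs <;> first | omega | ring

end Objective

/-- Indices are 0-based: user `k` here is user `k + 1` of the paper. -/
theorem partial_derivative_formula_general
    (K : ℕ) (g Q : Fin K → ℝ) (η Z Pmax : ℝ)
    (hgpos : ∀ i, 0 < g i) (hη : 0 < η) :
    ∀ p ∈ Dfeas K Pmax, DifferentiableAt ℝ (Fobj K g Q η Z) p ∧
      ∀ k : Fin K,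
        fderiv ℝ (Fobj K g Q η Z) p (Pi.single k 1) =
          (∑ j ∈ Finset.Ico (k : ℕ) (K - 1),
            (ext K g j * ext K Q j / (Sfun K p (j + 1) * ext K g j + η)
              - ext K g (j + 1) * ext K Q (j + 1)
                / (Sfun K p (j + 1) * ext K g (j + 1) + η)))
          + ext K g (K - 1) * ext K Q (K - 1)
              / (Sfun K p K * ext K g (K - 1) + η)
          - Z := by
  intro p hp
  have hden : ∀ (m : ℕ) (k : Fin K), 0 < Sfun K p m * g k + η := fun m k =>
    add_pos_of_nonneg_of_pos (mul_nonneg (Sfun_nonneg hp.1 m) (hgpos k).le) hη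
  refine ⟨(hasFDerivAt_Fobj hden).differentiableAt, fun k => ?_⟩
  have hA := sum_fin_ite_le_eq_sum_Ico
    (fun n => ext K g n * ext K Q n / (Sfun K p (n + 1) * ext K g n + η)) k K
  have hB := sum_fin_ite_le_eq_sum_Ico
    (fun n => ext K g n * ext K Q n / (Sfun K p n * ext K g n + η)) (k + 1) K
  simp only [ext_val] at hA hB
  rw [(hasFDerivAt_Fobj hden).fderiv, FobjDeriv_single, hA, hB,
    sum_Ico_sub_sum_Ico_succ _ _ k.isLt, Nat.sub_add_cancel k.pos]

/-- **Partial derivative formula for the NOMA objective.** `F` is differentiable at every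
point of `D`, and (in 0-based indexing, user `k` here being user `k+1` of the paper)
`∂F/∂p_k(p) = Σ_{j=k}^{K−2} [g_j Q_j/(S_{j+1} g_j + η) − g_{j+1} Q_{j+1}/(S_{j+1} g_{j+1} + η)]
 + g_{K−1} Q_{K−1}/(S_K g_{K−1} + η) − Z`. -/
theorem partial_derivative_formula
    (K : ℕ) (hK : 1 ≤ K) (g Q : Fin K → ℝ) (η Z Pmax : ℝ)
    (hg : ∀ i j : Fin K, i ≤ j → g j ≤ g i) (hgpos : ∀ i, 0 < g i)
    (hQpos : ∀ i, 0 < Q i) (hη : 0 < η) (hZ : 0 < Z) (hP : 0 < Pmax) :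
    ∀ p ∈ Dfeas K Pmax, DifferentiableAt ℝ (Fobj K g Q η Z) p ∧
      ∀ k : Fin K,
        fderiv ℝ (Fobj K g Q η Z) p (Pi.single k 1) =
          (∑ j ∈ Finset.Ico (k : ℕ) (K - 1),
            (ext K g j * ext K Q j / (Sfun K p (j + 1) * ext K g j + η)
              - ext K g (j + 1) * ext K Q (j + 1)
                / (Sfun K p (j + 1) * ext K g (j + 1) + η)))
          + ext K g (K - 1) * ext K Q (K - 1)
              / (Sfun K p K * ext K g (K - 1) + η)
          - Z :=
  partial_derivative_formula_general K g Q η Z Pmax hgpos hη
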